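/- Let ψ : ℕ → ℝ⁺ be non-decreasing with liminf_{n→∞} (log ψ(n))/n = ∞ and b := exp(liminf_{n→∞} (log log ψ(n))/n) = ∞. Then the Hausdorff dimension of F(r, ψ) equals 0. -/

import Mathlib

open MeasureTheory Filter Set

/-- The Gauss map. -/
noncomputable def gaussMap (x : ℝ) : ℝ := if x = 0 then 0 else 1 / x - ⌊(1 / x : ℝ)⌋

/-- The `k`-th partial quotient of the continued fraction expansion of `x` (for `k ≥ 1`). -/
noncomputable def cfa (k : ℕ) (x : ℝ) : ℕ := ⌊1 / (gaussMap^[k - 1] x)⌋₊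

/-- The set `F(r, ψ)` of points with at least `r` partial quotients `≥ ψ(n)` among the
first `n` terms, for infinitely many `n`. -/
noncomputable def Fset (r : ℕ) (ψ : ℕ → ℝ) : Set ℝ :=
  {x | x ∈ Set.Ico (0 : ℝ) 1 ∧ ∀ N : ℕ, ∃ n ≥ N, ∃ k : Fin r → ℕ,
    StrictMono k ∧ (∀ i, 1 ≤ k i ∧ k i ≤ n) ∧ ∀ i, ψ n ≤ (cfa (k i) x : ℝ)}

/-!
Since `log log ψ(n) / n → ∞`, eventually `ψ(n) ≥ exp (cⁿ)` for every `c`, so the partial quotients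
`a_k` of an irrational `x ∈ F(r, ψ)` exceed every doubly exponential bound infinitely often.
If `a_{k+1} < q_k ^ m` held for all large `k`, the continuant recursion
`q_{k+1} ≤ (a_{k+1} + 1) q_k` would make `q_k`, and with it `a_k`, grow at most doubly
exponentially. Hence `a_{k+1} ≥ q_k ^ m` infinitely often, and then
`|x - p_k / q_k| ≤ 1 / (a_{k+1} q_k ^ 2) ≤ q_k ^ (-m)`. So the irrational points of `F(r, ψ)` are
approximable to every order `m`, and by the Hausdorff–Cantelli lemma the set of such points has
dimension at most `2 / m`.
-/

open scoped ENNReal Topology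
open Metric

theorem hausdorffMeasure_limsup_eq_zero {X : Type*} [EMetricSpace X] [MeasurableSpace X]
    [BorelSpace X] {ι : ℕ → Type*} [∀ q, Fintype (ι q)] {d : ℝ} (hd : 0 < d)
    (E : ∀ q, ι q → Set X) (hsum : ∑' q, ∑ i, ediam (E q i) ^ d ≠ ∞) :
    μH[d] {x | ∃ᶠ q in atTop, ∃ i, x ∈ E q i} = 0 := by
  set tail : ℕ → ℝ≥0∞ := fun N => ∑' j, ∑ i, ediam (E (j + N) i) ^ d
  have htail : Tendsto tail atTop (𝓝 0) := ENNReal.tendsto_sum_nat_add _ hsum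
  have hdiam : ∀ N j i, ediam (E (j + N) i) ≤ tail N ^ d⁻¹ := by
    intro N j i
    calc ediam (E (j + N) i) = (ediam (E (j + N) i) ^ d) ^ d⁻¹ := by
          rw [ENNReal.rpow_rpow_inv hd.ne']
      _ ≤ tail N ^ d⁻¹ := by
          gcongr
          exact (Finset.single_le_sum (fun i _ => zero_le) (Finset.mem_univ i)).trans
            (ENNReal.le_tsum (f := fun j => ∑ i, ediam (E (j + N) i) ^ d) j)
  have hcover :=
    Measure.hausdorffMeasure_le_liminf_tsum d {x | ∃ᶠ q in atTop, ∃ i, x ∈ E q i}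
    (fun N => tail N ^ d⁻¹) (by simpa [hd] using htail.ennrpow_const d⁻¹)
    (fun N (ji : Σ j, ι (j + N)) => E (ji.1 + N) ji.2)
    (Eventually.of_forall fun N ji => hdiam N ji.1 ji.2) (Eventually.of_forall fun N x hx => by
      obtain ⟨q, hqN, i, hi⟩ := (frequently_atTop.1 hx) N
      obtain ⟨j, rfl⟩ : ∃ j, q = j + N := ⟨q - N, by omega⟩
      exact mem_iUnion.2 ⟨⟨j, i⟩, hi⟩)
  simp only [ENNReal.tsum_sigma', tsum_fintype] at hcover
  exact le_antisymm (hcover.trans_eq htail.liminf_eq) zero_le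

theorem summable_succ_mul_div_pow_rpow {m : ℕ} {d : ℝ} (hd : 0 < d) (hmd : 2 < m * d) :
    Summable fun q : ℕ => ((q : ℝ) + 1) * (2 / (q : ℝ) ^ m) ^ d := by
  have hm : m ≠ 0 := by rintro rfl; norm_num at hmd
  refine .of_nonneg_of_le (fun q => by positivity) (fun q => ?_)
    ((Real.summable_nat_rpow.2 (by linarith : 1 - m * d < -1)).mul_left (2 * 2 ^ d))
  rcases Nat.eq_zero_or_pos q with rfl | hq
  · simp [hm, hd.ne', Real.zero_rpow (by linarith : 1 - m * d ≠ 0)]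
  have hq1 : (1 : ℝ) ≤ q := by exact_mod_cast hq
  have hq0 : (0 : ℝ) < q := by positivity
  calc ((q : ℝ) + 1) * (2 / (q : ℝ) ^ m) ^ d
      = ((q : ℝ) + 1) * (2 ^ d * (q : ℝ) ^ (-(m * d))) := by
        rw [Real.div_rpow (by norm_num) (by positivity), ← Real.rpow_natCast,
          ← Real.rpow_mul hq0.le, Real.rpow_neg hq0.le, div_eq_mul_inv]
    _ ≤ 2 * q * (2 ^ d * (q : ℝ) ^ (-(m * d))) := by gcongr; linarith
    _ = 2 * 2 ^ d * (q : ℝ) ^ (1 - m * d) := by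
        rw [sub_eq_add_neg, Real.rpow_add hq0, Real.rpow_one]; ring

theorem ediam_closedBall_le (c r : ℝ) : ediam (closedBall c r) ≤ ENNReal.ofReal (2 * r) :=
  Metric.ediam_le_of_forall_dist_le fun x hx y hy =>
    (dist_triangle_right x y c).trans (by rw [mem_closedBall] at hx hy; linarith)

def approxSet (m : ℕ) : Set ℝ :=
  {x | ∃ᶠ q : ℕ in atTop, ∃ p ≤ q, |x - p / q| ≤ 1 / (q : ℝ) ^ m}

theorem hausdorffMeasure_approxSet_eq_zero {m : ℕ} {d : ℝ} (hd : 0 < d) (hmd : 2 < m * d) :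
    μH[d] (approxSet m) = 0 := by
  set E : ∀ q : ℕ, Fin (q + 1) → Set ℝ := fun q p => closedBall (p / q) (1 / (q : ℝ) ^ m)
  have hsub : approxSet m ⊆ {x | ∃ᶠ q in atTop, ∃ p, x ∈ E q p} := fun x hx =>
    hx.mono fun q ⟨p, hpq, hp⟩ =>
      ⟨⟨p, Nat.lt_succ_of_le hpq⟩, by simpa [E, Real.dist_eq] using hp⟩
  refine measure_mono_null hsub (hausdorffMeasure_limsup_eq_zero hd E (ne_top_of_le_ne_top
    (ENNReal.ofReal_ne_top (r := ∑' q : ℕ, ((q : ℝ) + 1) * (2 / (q : ℝ) ^ m) ^ d)) ?_))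
  rw [ENNReal.ofReal_tsum_of_nonneg (fun q => by positivity)
    (summable_succ_mul_div_pow_rpow hd hmd)]
  refine ENNReal.tsum_le_tsum fun q => ?_
  calc ∑ p, ediam (E q p) ^ d
      ≤ ∑ _p : Fin (q + 1), ENNReal.ofReal ((2 / (q : ℝ) ^ m) ^ d) := by
        gcongr with p
        rw [← ENNReal.ofReal_rpow_of_nonneg (by positivity) hd.le, ← mul_one_div]
        gcongr
        exact ediam_closedBall_le _ _
    _ = ENNReal.ofReal (((q : ℝ) + 1) * (2 / (q : ℝ) ^ m) ^ d) := by
        rw [Finset.sum_const, Finset.card_univ, Fintype.card_fin, nsmul_eq_mul,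
          ENNReal.ofReal_mul (by positivity)]
        norm_cast

/-- `contNum a (k + 1) / contDen a (k + 1)` is the continued fraction `[0; a 0, …, a (k - 1)]`. -/
def contDen (a : ℕ → ℕ) : ℕ → ℕ
  | 0 => 0
  | 1 => 1
  | k + 2 => a k * contDen a (k + 1) + contDen a k

def contNum (a : ℕ → ℕ) : ℕ → ℕ
  | 0 => 1
  | 1 => 0
  | k + 2 => a k * contNum a (k + 1) + contNum a k

section Continuants

variable {a : ℕ → ℕ}

theorem one_le_contDen_succ (ha : ∀ k, 1 ≤ a k) : ∀ k, 1 ≤ contDen a (k + 1)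
  | 0 => le_rfl
  | k + 1 => (one_le_contDen_succ ha k).trans <| (Nat.le_mul_of_pos_left _ (ha k)).trans <|
      Nat.le_add_right _ _

theorem contDen_le_succ (ha : ∀ k, 1 ≤ a k) : ∀ k, contDen a k ≤ contDen a (k + 1)
  | 0 => Nat.zero_le _
  | k + 1 => (Nat.le_mul_of_pos_left _ (ha k)).trans (Nat.le_add_right _ _)

theorem le_contDen_succ (ha : ∀ k, 1 ≤ a k) : ∀ k, k ≤ contDen a (k + 1)
  | 0 => Nat.zero_le _
  | k + 1 => by
    have hq : contDen a (k + 1) ≤ a k * contDen a (k + 1) := Nat.le_mul_of_pos_left _ (ha k)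
    have ih := le_contDen_succ ha k
    have h1 := one_le_contDen_succ ha k
    have h0 : k = 0 ∨ 1 ≤ contDen a k := by
      rcases k with _ | k
      · exact .inl rfl
      · exact .inr (one_le_contDen_succ ha k)
    change k + 1 ≤ a k * contDen a (k + 1) + contDen a k
    omega

theorem tendsto_contDen_succ (ha : ∀ k, 1 ≤ a k) :
    Tendsto (fun k => contDen a (k + 1)) atTop atTop :=
  tendsto_atTop_mono (le_contDen_succ ha) tendsto_id

theorem contDen_succ_le_pow_pow (ha : ∀ k, 1 ≤ a k) {m K : ℕ}
    (hsmall : ∀ k ≥ K, a k < contDen a (k + 1) ^ m) :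
    ∀ k ≥ K, contDen a (k + 1) ≤ contDen a (K + 1) ^ (m + 1) ^ (k - K) := by
  intro k hk
  induction k, hk using Nat.le_induction with
  | base => simp
  | succ k hk ih =>
    have hak : a k + 1 ≤ contDen a (k + 1) ^ m := hsmall k hk
    calc contDen a (k + 2) = a k * contDen a (k + 1) + contDen a k := rfl
      _ ≤ (a k + 1) * contDen a (k + 1) := by
          rw [add_one_mul]; exact Nat.add_le_add_left (contDen_le_succ ha k) _
      _ ≤ contDen a (k + 1) ^ (m + 1) := by rw [pow_succ]; gcongr
      _ ≤ (contDen a (K + 1) ^ (m + 1) ^ (k - K)) ^ (m + 1) := by gcongr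
      _ = contDen a (K + 1) ^ (m + 1) ^ (k + 1 - K) := by
          rw [← pow_mul, ← pow_succ, Nat.sub_add_comm hk]

theorem exists_pow_pow_lt_exp_pow {C : ℝ} (hC : 0 < C) (d : ℕ) :
    ∃ c ≥ 1, ∀ᶠ k in atTop, C ^ d ^ k < Real.exp (c ^ k) := by
  set L := |Real.log C|
  refine ⟨(d + 1) * (L + 1), one_le_mul_of_one_le_of_one_le (by simp) (by simp [L]),
    eventually_ge_atTop 1 |>.mono fun k hk => ?_⟩
  rw [← Real.exp_log (pow_pos hC _), Real.exp_lt_exp, Real.log_pow, mul_pow]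
  push_cast
  calc (d : ℝ) ^ k * Real.log C ≤ (d ^ k : ℝ) * L := by gcongr; exact le_abs_self _
    _ ≤ ((d : ℝ) + 1) ^ k * L := by gcongr; linarith
    _ < ((d : ℝ) + 1) ^ k * (L + 1) := by gcongr; linarith
    _ ≤ ((d : ℝ) + 1) ^ k * (L + 1) ^ k := by
        gcongr; exact le_self_pow₀ (by simp [L]) (by omega)

theorem frequently_contDen_pow_le (ha : ∀ k, 1 ≤ a k)
    (hfast : ∀ c ≥ (1 : ℝ), ∃ᶠ k in atTop, Real.exp (c ^ k) ≤ a k) (m : ℕ) :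
    ∃ᶠ k in atTop, contDen a (k + 1) ^ m ≤ a k := by
  -- Otherwise `contDen a (k + 2) ≤ contDen a (k + 1) ^ (m + 1)` from some `K` on, so
  -- `a k ≤ contDen a (k + 2)` is at most doubly exponential in `k`.
  by_contra h
  obtain ⟨K, hK⟩ := eventually_atTop.1 (not_frequently.1 h)
  set Q := contDen a (K + 1)
  have hQ : (0 : ℝ) < Q ^ (m + 1) := by have := one_le_contDen_succ ha K; positivity
  obtain ⟨c, hc, hlt⟩ := exists_pow_pow_lt_exp_pow hQ (m + 1)
  obtain ⟨k, hexp, hkK, hk⟩ :=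
    ((hfast c hc).and_eventually ((eventually_ge_atTop K).and hlt)).exists
  have hbound : a k ≤ Q ^ (m + 1) ^ (k + 1) := calc
    a k ≤ a k * contDen a (k + 1) := Nat.le_mul_of_pos_right _ (one_le_contDen_succ ha k)
    _ ≤ contDen a (k + 2) := Nat.le_add_right _ _
    _ ≤ Q ^ (m + 1) ^ (k + 1 - K) :=
        contDen_succ_le_pow_pow ha (fun k hk => not_le.1 (hK k hk)) (k + 1) (by omega)
    _ ≤ Q ^ (m + 1) ^ (k + 1) :=
        Nat.pow_le_pow_right (one_le_contDen_succ ha K) (Nat.pow_le_pow_right (by omega) (by omega))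
  have : (a k : ℝ) ≤ ((Q : ℝ) ^ (m + 1)) ^ (m + 1) ^ k := by
    rw [← pow_mul, ← pow_succ']; exact_mod_cast hbound
  linarith

/- `hrec` says `X k = 1 / (a k + X (k + 1))`: `X` is the Gauss-map orbit of `X 0` and `a` its
sequence of partial quotients. -/
variable {X : ℕ → ℝ} (hrec : ∀ k, X k * (a k + X (k + 1)) = 1)
include hrec

theorem contErr_succ (k : ℕ) :
    X 0 * contDen a (k + 1) - contNum a (k + 1) = -X k * (X 0 * contDen a k - contNum a k) := by
  induction k with
  | zero => simp [contDen, contNum]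
  | succ k ih =>
    push_cast [contDen, contNum]
    linear_combination (a k + X (k + 1)) * ih - (X 0 * contDen a k - contNum a k) * hrec k

theorem abs_contErr_mul_eq_one (hX : ∀ k, 0 ≤ X k) (k : ℕ) :
    |X 0 * contDen a k - contNum a k| * (X k * contDen a k + contDen a (k + 1)) = 1 := by
  induction k with
  | zero => simp [contDen, contNum]
  | succ k ih =>
    have hS : X k * (X (k + 1) * contDen a (k + 1) + contDen a (k + 2)) =
        X k * contDen a k + contDen a (k + 1) := by
      push_cast [contDen]
      linear_combination (contDen a (k + 1) : ℝ) * hrec k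
    rw [contErr_succ hrec, abs_mul, abs_neg, abs_of_nonneg (hX k), ← ih, ← hS]
    ring

theorem abs_contErr_succ_mul_le_one (hX : ∀ k, 0 ≤ X k) (k : ℕ) :
    |X 0 * contDen a (k + 1) - contNum a (k + 1)| * (a k * contDen a (k + 1)) ≤ 1 := by
  refine le_of_le_of_eq ?_ (abs_contErr_mul_eq_one hrec hX (k + 1))
  gcongr
  push_cast [contDen]
  have := hX (k + 1)
  nlinarith

theorem contNum_succ_le_contDen_succ (hX : ∀ k, 0 ≤ X k) (hX0 : X 0 < 1) (ha : ∀ k, 1 ≤ a k)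
    (k : ℕ) : contNum a (k + 1) ≤ contDen a (k + 1) := by
  have hq : (1 : ℝ) ≤ contDen a (k + 1) := by exact_mod_cast one_le_contDen_succ ha k
  have hS : (1 : ℝ) ≤ X (k + 1) * contDen a (k + 1) + contDen a (k + 2) := by
    have := hX (k + 1)
    have : (1 : ℝ) ≤ contDen a (k + 2) := by exact_mod_cast one_le_contDen_succ ha (k + 1)
    nlinarith
  have herr : |X 0 * contDen a (k + 1) - contNum a (k + 1)| ≤ 1 := by
    have := abs_contErr_mul_eq_one hrec hX (k + 1)
    nlinarith [abs_nonneg (X 0 * contDen a (k + 1) - contNum a (k + 1))]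
  have : (contNum a (k + 1) : ℝ) < contDen a (k + 1) + 1 := by
    nlinarith [(abs_le.1 herr).1]
  exact_mod_cast Nat.lt_succ_iff.1 (by exact_mod_cast this)

theorem mem_approxSet_of_frequently_contDen_pow_le (hX : ∀ k, 0 ≤ X k) (hX0 : X 0 < 1)
    (ha : ∀ k, 1 ≤ a k) {m : ℕ}
    (hfreq : ∃ᶠ k in atTop, contDen a (k + 1) ^ m ≤ a k) : X 0 ∈ approxSet m := by
  refine (tendsto_contDen_succ ha).frequently (hfreq.mono fun k hk => ?_)
  refine ⟨contNum a (k + 1), contNum_succ_le_contDen_succ hrec hX hX0 ha k, ?_⟩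
  have hq : (1 : ℝ) ≤ contDen a (k + 1) := by exact_mod_cast one_le_contDen_succ ha k
  have hqa : (contDen a (k + 1) : ℝ) ^ m ≤ a k := by exact_mod_cast hk
  have he := abs_contErr_succ_mul_le_one hrec hX k
  set q : ℝ := (contDen a (k + 1) : ℝ)
  set e := X 0 * q - contNum a (k + 1)
  have hsub : X 0 - contNum a (k + 1) / q = e / q := by
    simp only [e]; field_simp
  rw [hsub, abs_div, abs_of_pos (a := q) (by linarith),
    div_le_div_iff₀ (by linarith) (by positivity)]
  calc |e| * q ^ m ≤ |e| * (a k * q) := by gcongr; nlinarith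
    _ ≤ 1 * q := by linarith

end Continuants

theorem gaussMap_eq_fract {x : ℝ} (hx : x ≠ 0) : gaussMap x = Int.fract (1 / x) := by
  rw [gaussMap, if_neg hx]
  rfl

theorem gaussMap_nonneg (x : ℝ) : 0 ≤ gaussMap x := by
  rcases eq_or_ne x 0 with rfl | hx
  · simp [gaussMap]
  · exact gaussMap_eq_fract hx ▸ Int.fract_nonneg _

theorem gaussMap_lt_one (x : ℝ) : gaussMap x < 1 := by
  rcases eq_or_ne x 0 with rfl | hx
  · simp [gaussMap]
  · exact gaussMap_eq_fract hx ▸ Int.fract_lt_one _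

theorem irrational_gaussMap {x : ℝ} (hx : Irrational x) : Irrational (gaussMap x) := by
  rw [gaussMap_eq_fract hx.ne_zero, Int.fract, one_div]
  exact hx.inv.sub_intCast _

theorem mul_floor_add_gaussMap {x : ℝ} (hx : 0 < x) : x * (⌊1 / x⌋₊ + gaussMap x) = 1 := by
  have hfloor : ((⌊1 / x⌋₊ : ℕ) : ℝ) = ((⌊1 / x⌋ : ℤ) : ℝ) := by
    exact_mod_cast Int.natCast_floor_eq_floor (by positivity)
  rw [gaussMap_eq_fract hx.ne', hfloor, Int.fract, add_sub_cancel, mul_one_div_cancel hx.ne']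

theorem irrational_gaussMap_iterate {x : ℝ} (hx : Irrational x) :
    ∀ k, Irrational (gaussMap^[k] x)
  | 0 => hx
  | k + 1 => by
    rw [Function.iterate_succ_apply']
    exact irrational_gaussMap (irrational_gaussMap_iterate hx k)

theorem gaussMap_iterate_mem_Ioo {x : ℝ} (hx : Irrational x) (hx01 : x ∈ Ico 0 1) :
    ∀ k, gaussMap^[k] x ∈ Ioo 0 1
  | 0 => ⟨hx01.1.lt_of_ne' hx.ne_zero, hx01.2⟩
  | k + 1 => by
    have hirr := irrational_gaussMap_iterate hx (k + 1)
    rw [Function.iterate_succ_apply'] at hirr ⊢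
    exact ⟨(gaussMap_nonneg _).lt_of_ne' hirr.ne_zero, gaussMap_lt_one _⟩

theorem mem_approxSet_of_frequently_exp_pow_le_cfa {x : ℝ} (hx : Irrational x)
    (hx01 : x ∈ Ico 0 1)
    (hfast : ∀ c ≥ (1 : ℝ), ∃ᶠ k in atTop, Real.exp (c ^ k) ≤ cfa (k + 1) x) (m : ℕ) :
    x ∈ approxSet m := by
  set X := fun k => gaussMap^[k] x
  have hX := gaussMap_iterate_mem_Ioo hx hx01
  have ha : ∀ k, 1 ≤ cfa (k + 1) x := fun k =>
    Nat.one_le_floor_iff _ |>.2 (one_le_one_div (hX k).1 (hX k).2.le)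
  have hrec : ∀ k, X k * (cfa (k + 1) x + X (k + 1)) = 1 := fun k => by
    simp only [X, cfa, Nat.add_sub_cancel, Function.iterate_succ_apply']
    exact mul_floor_add_gaussMap (hX k).1
  exact mem_approxSet_of_frequently_contDen_pow_le hrec (fun k => (hX k).1.le) (hX 0).2 ha
    (frequently_contDen_pow_le ha hfast m)

theorem eventually_exp_pow_le {ψ : ℕ → ℝ} (hpos : ∀ n, 0 < ψ n)
    (hB : Tendsto (fun n : ℕ => Real.log (ψ n) / n) atTop atTop)
    (hb : Tendsto (fun n : ℕ => Real.log (Real.log (ψ n)) / n) atTop atTop) {c : ℝ}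
    (hc : 0 < c) : ∀ᶠ n in atTop, Real.exp (c ^ n) ≤ ψ n := by
  filter_upwards [hB.eventually_gt_atTop 0, hb.eventually_ge_atTop (Real.log c),
    eventually_gt_atTop 0] with n hlog hloglog hn
  have hn' : (0 : ℝ) < n := by exact_mod_cast hn
  have hlog : 0 < Real.log (ψ n) := (div_pos_iff_of_pos_right hn').1 hlog
  have hcn : c ^ n ≤ Real.log (ψ n) := by
    rw [← Real.log_le_log_iff (by positivity) hlog, Real.log_pow]
    rwa [le_div_iff₀ hn', mul_comm] at hloglog
  calc Real.exp (c ^ n) ≤ Real.exp (Real.log (ψ n)) := Real.exp_le_exp.2 hcn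
    _ = ψ n := Real.exp_log (hpos n)

theorem frequently_le_cfa_of_mem_Fset {r : ℕ} (hr : 1 ≤ r) {ψ : ℕ → ℝ} (hmono : Monotone ψ)
    (htend : Tendsto ψ atTop atTop) {x : ℝ} (hx : x ∈ Fset r ψ) :
    ∃ᶠ k in atTop, ψ (k + 1) ≤ cfa (k + 1) x := by
  refine frequently_atTop.2 fun K => ?_
  set B := (Finset.range K).sup fun i => cfa (i + 1) x
  obtain ⟨n₀, hn₀⟩ := eventually_atTop.1 (htend.eventually_gt_atTop (B : ℝ))
  obtain ⟨n, hn, k, -, hk, hψ⟩ := hx.2 n₀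
  obtain ⟨hj1, hjn⟩ := hk ⟨0, hr⟩
  have hψj := hψ ⟨0, hr⟩
  set j := k ⟨0, hr⟩
  have hKj : K ≤ j - 1 := by
    by_contra! hjK
    have hjB : cfa (j - 1 + 1) x ≤ B :=
      Finset.le_sup (f := fun i => cfa (i + 1) x) (Finset.mem_range.2 hjK)
    rw [Nat.sub_add_cancel hj1] at hjB
    have := hn₀ n hn
    have : (cfa j x : ℝ) ≤ B := by exact_mod_cast hjB
    linarith
  refine ⟨j - 1, hKj, ?_⟩
  rw [Nat.sub_add_cancel hj1]
  exact (hmono hjn).trans hψj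

theorem Fset_subset_approxSet_union {r : ℕ} (hr : 1 ≤ r) {ψ : ℕ → ℝ} (hpos : ∀ n, 0 < ψ n)
    (hmono : Monotone ψ) (hB : Tendsto (fun n : ℕ => Real.log (ψ n) / n) atTop atTop)
    (hb : Tendsto (fun n : ℕ => Real.log (Real.log (ψ n)) / n) atTop atTop) (m : ℕ) :
    Fset r ψ ⊆ approxSet m ∪ range ((↑) : ℚ → ℝ) := by
  intro x hx
  by_cases hirr : Irrational x
  · have htend : Tendsto ψ atTop atTop :=
      tendsto_atTop_mono' atTop (eventually_exp_pow_le hpos hB hb two_pos)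
        (Real.tendsto_exp_atTop.comp (tendsto_pow_atTop_atTop_of_one_lt one_lt_two))
    refine .inl (mem_approxSet_of_frequently_exp_pow_le_cfa hirr hx.1 (fun c hc => ?_) m)
    refine (frequently_le_cfa_of_mem_Fset hr hmono htend hx).and_eventually
      ((tendsto_add_atTop_nat 1).eventually
        (eventually_exp_pow_le hpos hB hb (c := c) (by linarith)))
      |>.mono fun k ⟨hψ, hexp⟩ => ?_
    calc Real.exp (c ^ k) ≤ Real.exp (c ^ (k + 1)) :=
          Real.exp_le_exp.2 (pow_le_pow_right₀ hc k.le_succ)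
      _ ≤ ψ (k + 1) := hexp
      _ ≤ cfa (k + 1) x := hψ
  · exact .inr (not_not.1 hirr)

theorem stmt_18 (r : ℕ) (hr : 1 ≤ r) (ψ : ℕ → ℝ) (hpos : ∀ n, 0 < ψ n)
    (hmono : Monotone ψ)
    (hB : Tendsto (fun n : ℕ => Real.log (ψ n) / n) atTop atTop)
    (hb : Tendsto (fun n : ℕ => Real.log (Real.log (ψ n)) / n) atTop atTop) :
    dimH (Fset r ψ) = 0 := by
  refine le_antisymm (ENNReal.le_of_forall_pos_le_add fun d hd _ => ?_) zero_le
  obtain ⟨m, hm⟩ := exists_nat_gt (2 / d : ℝ)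
  have hd' : (0 : ℝ) < d := hd
  have hmd : 2 < m * (d : ℝ) := by rwa [div_lt_iff₀ hd'] at hm
  calc dimH (Fset r ψ) ≤ dimH (approxSet m ∪ range ((↑) : ℚ → ℝ)) :=
        dimH_mono (Fset_subset_approxSet_union hr hpos hmono hB hb m)
    _ = dimH (approxSet m) := by
        rw [dimH_union, dimH_countable (countable_range _), max_eq_left zero_le]
    _ ≤ d := dimH_le_of_hausdorffMeasure_ne_top <| by
        rw [hausdorffMeasure_approxSet_eq_zero hd' hmd]; exact ENNReal.zero_ne_top
    _ = 0 + d := (zero_add _).symm
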